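/- If a homogeneous polynomial f of degree p in n real variables is orthogonally diagonalizable (i.e., f(Qx) = Σ λ_i x_i^p for some orthogonal matrix Q and reals λ_i), or more generally proportional to a power of an orthogonally diagonalizable polynomial, then ρ₁(f) := lim_{k→∞} ‖f^k‖_HS^{1/k} = ‖f‖_σ. -/

import Mathlib

open scoped BigOperators
open MvPolynomial

/-- The Bombieri (Hilbert–Schmidt) norm of a homogeneous polynomial of degree `p`:
`‖f‖_HS² = ∑ (p!/(j₁!⋯jₙ!)) φ_j²`, where `f = ∑ (p!/(j₁!⋯jₙ!)) φ_j x^j`; equivalently,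
in terms of the monomial coefficients of `f`,
`‖f‖_HS² = ∑_d (∏ᵢ (dᵢ)! / p!) (coeff d f)²`. -/
noncomputable def bombieriNorm {n : ℕ} (p : ℕ) (f : MvPolynomial (Fin n) ℝ) : ℝ :=
  Real.sqrt (∑ d ∈ f.support,
    ((∏ i, (Nat.factorial (d i) : ℝ)) / (Nat.factorial p : ℝ)) * (f.coeff d) ^ 2)

/-- The `p`-th power of the linear form `x ↦ cᵀx`, as a polynomial. -/
noncomputable def linPow {n : ℕ} (c : Fin n → ℝ) (p : ℕ) : MvPolynomial (Fin n) ℝ :=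
  (∑ i, MvPolynomial.C (c i) * MvPolynomial.X i) ^ p


/-- The spectral (sigma) norm of a polynomial: the sup of `|f(x)|` over the unit sphere. -/
noncomputable def sigmaNorm {n : ℕ} (f : MvPolynomial (Fin n) ℝ) : ℝ :=
  sSup { r | ∃ x : EuclideanSpace ℝ (Fin n), ‖x‖ = 1 ∧
    r = |MvPolynomial.eval (fun i => x i) f| }

/-!
The unnormalised Bombieri pairing `⟪f, g⟫ = ∑_d d! f_d g_d` makes multiplication by `Xᵢ` adjoint
to `∂ᵢ`; together with the chain rule this makes it invariant under orthogonal substitutions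
`x ↦ Qx`. Cauchy–Schwarz against the multinomial expansion of `(∑ xᵢ²)^p` shows that it dominates
point evaluation on the unit sphere, whence `‖f‖_σ ≤ ‖f^k‖_HS^{1/k}` for every `k`.

Conversely, substituting `x ↦ Qx` turns `f^k` into `a^k D^{mk}` with `D = ∑ λᵢ xᵢ^q`, and
`‖D^N‖_HS ≤ S^N (N+1)^{n/2}` for a value `S = |D(y)|` taken on the unit sphere: `S = ‖λ‖₂` at
`y = λ/‖λ‖₂` if `q = 1`, and `S = max |λᵢ|` at a basis vector if `q ≥ 2`, where the bound rests on
`multinomial(k)² ≤ multinomial(q k)`. Hence `‖f^k‖_HS^{1/k} ≤ ‖f‖_σ (mk+1)^{n/(2k)} → ‖f‖_σ`.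
-/

open Finset MvPolynomial
open scoped Matrix

namespace Nat

lemma choose_mul_choose_le_choose_add (a b c d : ℕ) :
    (a + b).choose a * (c + d).choose c ≤ (a + b + (c + d)).choose (a + c) := by
  rw [add_choose_eq (a + b) (c + d)]
  exact single_le_sum (f := fun ij : ℕ × ℕ => (a + b).choose ij.1 * (c + d).choose ij.2)
    (fun _ _ => Nat.zero_le _) (mem_antidiagonal.mpr rfl : (a, c) ∈ antidiagonal (a + c))

lemma multinomial_mul_multinomial_le {ι : Type*} (s : Finset ι) (f g : ι → ℕ) :
    multinomial s f * multinomial s g ≤ multinomial s (f + g) := by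
  induction s using Finset.cons_induction with
  | empty => simp
  | cons a s ha ih =>
    simp only [multinomial_cons, Pi.add_apply, sum_add_distrib]
    calc (f a + ∑ i ∈ s, f i).choose (f a) * multinomial s f
          * ((g a + ∑ i ∈ s, g i).choose (g a) * multinomial s g)
        = (f a + ∑ i ∈ s, f i).choose (f a) * (g a + ∑ i ∈ s, g i).choose (g a)
          * (multinomial s f * multinomial s g) := by ring
      _ ≤ (f a + ∑ i ∈ s, f i + (g a + ∑ i ∈ s, g i)).choose (f a + g a)
          * multinomial s (f + g) := Nat.mul_le_mul (choose_mul_choose_le_choose_add ..) ih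
      _ = _ := by congr 2; ring

lemma multinomial_sq_le_multinomial_smul {ι : Type*} (s : Finset ι) (f : ι → ℕ) {q : ℕ}
    (hq : 2 ≤ q) : multinomial s f ^ 2 ≤ multinomial s (q • f) := by
  induction q, hq using Nat.le_induction with
  | base => rw [sq, two_smul]; exact multinomial_mul_multinomial_le s f f
  | succ q _ ih =>
    calc multinomial s f ^ 2 ≤ multinomial s (q • f) * multinomial s f :=
          ih.trans (Nat.le_mul_of_pos_right _ (multinomial_pos s f))
      _ ≤ multinomial s ((q + 1) • f) := by
          rw [succ_nsmul]; exact multinomial_mul_multinomial_le s _ f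

end Nat

lemma sq_prod_pow {ι M : Type*} [Fintype ι] [CommMonoid M] (x : ι → M) (d : ι →₀ ℕ) :
    (∏ i, x i ^ d i) ^ 2 = ∏ i, (x i ^ 2) ^ d i := by
  rw [← prod_pow]; simp_rw [← pow_mul, mul_comm]

lemma sum_multinomial_mul_prod_pow_le {ι : Type*} [Fintype ι] {N : ℕ}
    {s : Finset (ι →₀ ℕ)} (hs : ∀ d ∈ s, d.degree = N) {y : ι → ℝ} (hy : 0 ≤ y) :
    ∑ d ∈ s, (Nat.multinomial univ d : ℝ) * ∏ i, y i ^ d i ≤ (∑ i, y i) ^ N := by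
  classical
  rw [sum_pow_eq_sum_piAntidiag]
  refine (sum_map s ⟨(⇑), DFunLike.coe_injective⟩
    fun k => (Nat.multinomial univ k : ℝ) * ∏ i, y i ^ k i).symm.trans_le ?_
  refine sum_le_sum_of_subset_of_nonneg ?_ fun k _ _ =>
    mul_nonneg (Nat.cast_nonneg _) (prod_nonneg fun i _ => pow_nonneg (hy i) _)
  intro k hk
  obtain ⟨d, hd, rfl⟩ := mem_map.mp hk
  simp [mem_piAntidiag, ← hs d hd, Finsupp.degree_eq_sum]

namespace MvPolynomial.IsHomogeneous

variable {σ R : Type*} [CommSemiring R] {N : ℕ} {f : MvPolynomial σ R}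

lemma degree_of_mem_support (hf : f.IsHomogeneous N) {d : σ →₀ ℕ} (hd : d ∈ f.support) :
    d.degree = N :=
  by_contra fun hne => mem_support_iff.mp hd (hf.coeff_eq_zero hne)

lemma card_support_le [Fintype σ] (hf : f.IsHomogeneous N) :
    #f.support ≤ (N + 1) ^ Fintype.card σ := by
  classical
  calc #f.support
      ≤ #((Fintype.piFinset fun _ : σ => range (N + 1)).map
          Finsupp.equivFunOnFinite.symm.toEmbedding) := by
        refine card_le_card fun d hd => mem_map.mpr ⟨⇑d, ?_, by simp⟩
        exact Fintype.mem_piFinset.mpr fun i => mem_range.mpr <|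
          Nat.lt_succ_of_le ((Finsupp.le_degree i d).trans (hf.degree_of_mem_support hd).le)
    _ = (N + 1) ^ Fintype.card σ := by simp

end MvPolynomial.IsHomogeneous

section BombieriPair

variable {n : ℕ}

noncomputable def factorialProd (d : Fin n →₀ ℕ) : ℝ := ∏ i, ((d i).factorial : ℝ)

lemma factorialProd_pos (d : Fin n →₀ ℕ) : 0 < factorialProd d :=
  prod_pos fun i _ => mod_cast (d i).factorial_pos

lemma factorialProd_mul_multinomial (d : Fin n →₀ ℕ) :
    factorialProd d * Nat.multinomial univ d = (d.degree.factorial : ℝ) := by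
  rw [factorialProd, Finsupp.degree_eq_sum]
  exact_mod_cast Nat.multinomial_spec univ d

lemma factorialProd_add_single (d : Fin n →₀ ℕ) (i : Fin n) :
    factorialProd (d + Finsupp.single i 1) = (d i + 1) * factorialProd d := by
  rw [factorialProd, factorialProd, ← mul_prod_erase univ _ (mem_univ i),
    ← mul_prod_erase univ _ (mem_univ i), ← mul_assoc]
  congr 1
  · simp [Nat.factorial_succ]
  · exact prod_congr rfl fun j hj => by simp [Finsupp.single_eq_of_ne (ne_of_mem_erase hj)]

noncomputable def bombieriPair (f g : MvPolynomial (Fin n) ℝ) : ℝ :=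
  ∑ d ∈ f.support, factorialProd d * f.coeff d * g.coeff d

lemma bombieriNorm_eq_sqrt (p : ℕ) (f : MvPolynomial (Fin n) ℝ) :
    bombieriNorm p f = √(bombieriPair f f / p.factorial) := by
  simp only [bombieriNorm, bombieriPair, sum_div, factorialProd]
  congr 1
  exact sum_congr rfl fun d _ => by ring

lemma bombieriNorm_nonneg (p : ℕ) (f : MvPolynomial (Fin n) ℝ) : 0 ≤ bombieriNorm p f :=
  Real.sqrt_nonneg _

lemma bombieriPair_self_nonneg (f : MvPolynomial (Fin n) ℝ) : 0 ≤ bombieriPair f f :=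
  sum_nonneg fun d _ => by
    rw [mul_assoc]; exact mul_nonneg (factorialProd_pos d).le (mul_self_nonneg _)

lemma bombieriPair_eq_sum_of_subset {f : MvPolynomial (Fin n) ℝ} (g : MvPolynomial (Fin n) ℝ)
    {s : Finset (Fin n →₀ ℕ)} (hs : f.support ⊆ s) :
    bombieriPair f g = ∑ d ∈ s, factorialProd d * f.coeff d * g.coeff d :=
  sum_subset hs fun d _ hd => by simp [notMem_support_iff.mp hd]

lemma bombieriPair_add_left (f₁ f₂ g : MvPolynomial (Fin n) ℝ) :
    bombieriPair (f₁ + f₂) g = bombieriPair f₁ g + bombieriPair f₂ g := by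
  rw [bombieriPair_eq_sum_of_subset g support_add,
    bombieriPair_eq_sum_of_subset g (subset_union_left (s₂ := f₂.support)),
    bombieriPair_eq_sum_of_subset g (subset_union_right (s₁ := f₁.support)), ← sum_add_distrib]
  exact sum_congr rfl fun d _ => by rw [coeff_add]; ring

lemma bombieriPair_add_right (f g₁ g₂ : MvPolynomial (Fin n) ℝ) :
    bombieriPair f (g₁ + g₂) = bombieriPair f g₁ + bombieriPair f g₂ := by
  simp only [bombieriPair, coeff_add, mul_add, sum_add_distrib]

lemma bombieriPair_sum_left {ι : Type*} (s : Finset ι) (f : ι → MvPolynomial (Fin n) ℝ)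
    (g : MvPolynomial (Fin n) ℝ) :
    bombieriPair (∑ j ∈ s, f j) g = ∑ j ∈ s, bombieriPair (f j) g :=
  map_sum (AddMonoidHom.mk' (bombieriPair · g) (bombieriPair_add_left · · g)) f s

lemma bombieriPair_sum_right {ι : Type*} (s : Finset ι) (f : MvPolynomial (Fin n) ℝ)
    (g : ι → MvPolynomial (Fin n) ℝ) :
    bombieriPair f (∑ j ∈ s, g j) = ∑ j ∈ s, bombieriPair f (g j) :=
  map_sum (AddMonoidHom.mk' (bombieriPair f) (bombieriPair_add_right f)) g s

lemma bombieriPair_C_mul_left (c : ℝ) (f g : MvPolynomial (Fin n) ℝ) :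
    bombieriPair (C c * f) g = c * bombieriPair f g := by
  rw [C_mul', bombieriPair_eq_sum_of_subset g support_smul, bombieriPair, mul_sum]
  exact sum_congr rfl fun d _ => by rw [coeff_smul, smul_eq_mul]; ring

lemma bombieriPair_C_mul_right (c : ℝ) (f g : MvPolynomial (Fin n) ℝ) :
    bombieriPair f (C c * g) = c * bombieriPair f g := by
  simp only [bombieriPair, coeff_C_mul, mul_sum]
  exact sum_congr rfl fun d _ => by ring

lemma bombieriPair_C_left (a : ℝ) (g : MvPolynomial (Fin n) ℝ) :
    bombieriPair (C a) g = a * constantCoeff g := by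
  rw [C_apply, bombieriPair_eq_sum_of_subset g support_monomial_subset, sum_singleton]
  simp [factorialProd, constantCoeff_eq]

lemma bombieriPair_mul_X (f g : MvPolynomial (Fin n) ℝ) (i : Fin n) :
    bombieriPair (f * X i) g = bombieriPair f (pderiv i g) := by
  rw [bombieriPair, support_mul_X, sum_map]
  refine sum_congr rfl fun d _ => ?_
  rw [addRightEmbedding_apply, coeff_mul_X, factorialProd_add_single, coeff_pderiv]
  ring

lemma bombieriNorm_C_mul (p : ℕ) (a : ℝ) (f : MvPolynomial (Fin n) ℝ) :
    bombieriNorm p (C a * f) = |a| * bombieriNorm p f := by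
  rw [bombieriNorm_eq_sqrt, bombieriNorm_eq_sqrt, bombieriPair_C_mul_left,
    bombieriPair_C_mul_right, ← mul_assoc, ← sq, mul_div_assoc, Real.sqrt_mul (sq_nonneg a),
    Real.sqrt_sq_eq_abs]

lemma bombieriNorm_le_of_bombieriPair_le {p : ℕ} {f : MvPolynomial (Fin n) ℝ} {B S : ℝ}
    (h : bombieriPair f f ≤ p.factorial * B * S ^ 2) : bombieriNorm p f ≤ |S| * √B := by
  have hp : (0 : ℝ) < p.factorial := mod_cast p.factorial_pos
  rw [bombieriNorm_eq_sqrt, ← Real.sqrt_sq_eq_abs, ← Real.sqrt_mul (sq_nonneg S)]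
  exact Real.sqrt_le_sqrt (by rw [div_le_iff₀ hp]; linarith)

end BombieriPair

section LinearSubst

variable {n : ℕ}

noncomputable def linearSubst (Q : Matrix (Fin n) (Fin n) ℝ) :
    MvPolynomial (Fin n) ℝ →ₐ[ℝ] MvPolynomial (Fin n) ℝ :=
  aeval fun i => ∑ j, C (Q i j) * X j

variable (Q : Matrix (Fin n) (Fin n) ℝ)

lemma linearSubst_X (i : Fin n) : linearSubst Q (X i) = ∑ j, C (Q i j) * X j := aeval_X _ i

lemma linearSubst_C (a : ℝ) : linearSubst Q (C a) = C a := aeval_C _ a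

lemma eval_linearSubst (g : MvPolynomial (Fin n) ℝ) (x : Fin n → ℝ) :
    eval x (linearSubst Q g) = eval (Q *ᵥ x) g := by
  induction g using MvPolynomial.induction_on with
  | C a => simp
  | add f g hf hg => simp [hf, hg]
  | mul_X p i hp => simp [hp, linearSubst_X, Matrix.mulVec, dotProduct]

lemma constantCoeff_linearSubst (g : MvPolynomial (Fin n) ℝ) :
    constantCoeff (linearSubst Q g) = constantCoeff g := by
  rw [← eval_zero, eval_linearSubst, Matrix.mulVec_zero]

lemma pderiv_linearSubst (j : Fin n) (g : MvPolynomial (Fin n) ℝ) :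
    pderiv j (linearSubst Q g) = ∑ i, C (Q i j) * linearSubst Q (pderiv i g) := by
  induction g using MvPolynomial.induction_on with
  | C a => simp
  | add f g hf hg => simp [hf, hg, mul_add, sum_add_distrib]
  | mul_X p i hp =>
    simp only [map_mul, map_add, linearSubst_X, Derivation.leibniz, hp, map_sum, pderiv_X,
      pderiv_C, smul_eq_mul, Pi.single_apply, mul_one, mul_zero, add_zero, sum_ite_eq',
      mem_univ, if_true, apply_ite, map_zero, mul_add, sum_add_distrib]
    rw [sum_ite_eq, if_pos (mem_univ _), mul_sum, mul_comm]
    exact congrArg₂ _ rfl (sum_congr rfl fun _ _ => mul_left_comm ..)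

variable {Q}

theorem bombieriPair_linearSubst (hQ : Qᵀ * Q = 1) (f g : MvPolynomial (Fin n) ℝ) :
    bombieriPair (linearSubst Q f) (linearSubst Q g) = bombieriPair f g := by
  have hrows (i i' : Fin n) : ∑ j, Q i j * Q i' j = if i = i' then 1 else 0 := by
    simpa [Matrix.mul_apply, Matrix.one_apply] using
      congrArg (· i i') (mul_eq_one_comm.mp hQ)
  induction f using MvPolynomial.induction_on generalizing g with
  | C a =>
    rw [linearSubst_C, bombieriPair_C_left, bombieriPair_C_left, constantCoeff_linearSubst]
  | add f₁ f₂ h₁ h₂ => rw [map_add, bombieriPair_add_left, bombieriPair_add_left, h₁, h₂]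
  | mul_X p i hp =>
    calc bombieriPair (linearSubst Q (p * X i)) (linearSubst Q g)
        = ∑ j, Q i j * bombieriPair (linearSubst Q p) (pderiv j (linearSubst Q g)) := by
          simp only [map_mul, linearSubst_X, mul_sum, bombieriPair_sum_left,
            mul_left_comm _ (C _), bombieriPair_C_mul_left, bombieriPair_mul_X]
      _ = ∑ i', (∑ j, Q i j * Q i' j)
            * bombieriPair (linearSubst Q p) (linearSubst Q (pderiv i' g)) := by
          simp only [pderiv_linearSubst, bombieriPair_sum_right, bombieriPair_C_mul_right,
            mul_sum, sum_mul]
          rw [sum_comm]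
          exact sum_congr rfl fun _ _ => sum_congr rfl fun _ _ => by ring
      _ = bombieriPair (p * X i) g := by simp [hrows, hp, bombieriPair_mul_X]

lemma bombieriNorm_linearSubst (hQ : Qᵀ * Q = 1) (p : ℕ) (f : MvPolynomial (Fin n) ℝ) :
    bombieriNorm p (linearSubst Q f) = bombieriNorm p f := by
  rw [bombieriNorm_eq_sqrt, bombieriNorm_eq_sqrt, bombieriPair_linearSubst hQ]

lemma sum_sq_mulVec (hQ : Qᵀ * Q = 1) (x : Fin n → ℝ) :
    ∑ i, (Q *ᵥ x) i ^ 2 = ∑ i, x i ^ 2 := by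
  have h : (Q *ᵥ x) ⬝ᵥ (Q *ᵥ x) = x ⬝ᵥ x := by
    rw [Matrix.dotProduct_mulVec, ← Matrix.mulVec_transpose, Matrix.mulVec_mulVec, hQ,
      Matrix.one_mulVec]
  simpa [dotProduct, sq] using h

end LinearSubst

section SigmaNorm

variable {n : ℕ}

theorem sq_eval_le_bombieriNorm_sq_mul {p : ℕ} {f : MvPolynomial (Fin n) ℝ}
    (hf : f.IsHomogeneous p) (x : Fin n → ℝ) :
    eval x f ^ 2 ≤ bombieriNorm p f ^ 2 * (∑ i, x i ^ 2) ^ p := by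
  have hp : (0 : ℝ) < p.factorial := mod_cast p.factorial_pos
  have hweight (d) (hd : d ∈ f.support) :
      factorialProd d * Nat.multinomial univ d = (p.factorial : ℝ) := by
    rw [factorialProd_mul_multinomial, hf.degree_of_mem_support hd]
  rw [bombieriNorm_eq_sqrt, Real.sq_sqrt (div_nonneg (bombieriPair_self_nonneg f) hp.le),
    eval_eq']
  calc (∑ d ∈ f.support, f.coeff d * ∏ i, x i ^ d i) ^ 2
      ≤ (∑ d ∈ f.support, factorialProd d / p.factorial * f.coeff d ^ 2)
          * ∑ d ∈ f.support, (Nat.multinomial univ d : ℝ) * ∏ i, (x i ^ 2) ^ d i := by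
        refine sum_sq_le_sum_mul_sum_of_sq_le_mul _
          (fun d _ => by have := factorialProd_pos d; positivity) (fun d _ => by positivity)
          fun d hd => le_of_eq ?_
        have hmult : (Nat.multinomial univ d : ℝ) ≠ 0 := mod_cast (Nat.multinomial_pos _ _).ne'
        rw [mul_pow, sq_prod_pow, ← hweight d hd]
        field_simp [(factorialProd_pos d).ne']
    _ ≤ (∑ d ∈ f.support, factorialProd d / p.factorial * f.coeff d ^ 2) * (∑ i, x i ^ 2) ^ p :=
        mul_le_mul_of_nonneg_left (sum_multinomial_mul_prod_pow_le
          (fun d hd => hf.degree_of_mem_support hd) fun i => sq_nonneg (x i))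
          (sum_nonneg fun d _ => by have := factorialProd_pos d; positivity)
    _ = _ := by
        rw [bombieriPair, sum_div]
        exact congrArg (· * _) (sum_congr rfl fun d _ => by ring)

lemma abs_eval_le_bombieriNorm {p : ℕ} {f : MvPolynomial (Fin n) ℝ} (hf : f.IsHomogeneous p)
    {x : Fin n → ℝ} (hx : ∑ i, x i ^ 2 = 1) : |eval x f| ≤ bombieriNorm p f :=
  abs_le_of_sq_le_sq (by simpa [hx] using sq_eval_le_bombieriNorm_sq_mul hf x)
    (bombieriNorm_nonneg p f)

lemma sigmaNorm_nonneg (f : MvPolynomial (Fin n) ℝ) : 0 ≤ sigmaNorm f :=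
  Real.sSup_nonneg fun _ ⟨_, _, h⟩ => h ▸ abs_nonneg _

lemma abs_eval_le_sigmaNorm {p : ℕ} {f : MvPolynomial (Fin n) ℝ} (hf : f.IsHomogeneous p)
    {x : Fin n → ℝ} (hx : ∑ i, x i ^ 2 = 1) : |eval x f| ≤ sigmaNorm f := by
  refine le_csSup ⟨bombieriNorm p f, ?_⟩ ⟨WithLp.toLp 2 x, ?_, rfl⟩
  · rintro _ ⟨y, hy, rfl⟩
    exact abs_eval_le_bombieriNorm hf (by rw [← EuclideanSpace.real_norm_sq_eq, hy, one_pow])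
  · simp [EuclideanSpace.norm_eq, hx]

theorem sigmaNorm_le_bombieriNorm_pow_rpow {p : ℕ} {f : MvPolynomial (Fin n) ℝ}
    (hf : f.IsHomogeneous p) {k : ℕ} (hk : k ≠ 0) :
    sigmaNorm f ≤ bombieriNorm (k * p) (f ^ k) ^ ((1 : ℝ) / k) := by
  refine Real.sSup_le ?_ (Real.rpow_nonneg (bombieriNorm_nonneg _ _) _)
  rintro _ ⟨x, hx, rfl⟩
  have hfk : |eval (fun i => x i) f| ^ k ≤ bombieriNorm (k * p) (f ^ k) := by
    rw [← abs_pow, ← map_pow]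
    exact abs_eval_le_bombieriNorm (mul_comm p k ▸ hf.pow k)
      (by rw [← EuclideanSpace.real_norm_sq_eq, hx, one_pow])
  calc |eval (fun i => x i) f| = (|eval (fun i => x i) f| ^ k) ^ ((1 : ℝ) / k) := by
        rw [one_div, Real.pow_rpow_inv_natCast (abs_nonneg _) hk]
    _ ≤ _ := Real.rpow_le_rpow (by positivity) hfk (by positivity)

end SigmaNorm

section DiagonalForm

variable {n : ℕ}

lemma isHomogeneous_linPow (c : Fin n → ℝ) (N : ℕ) : (linPow c N).IsHomogeneous N := by
  rw [linPow]
  simpa using (IsHomogeneous.sum _ _ 1 fun i _ => isHomogeneous_C_mul_X (c i) i).pow N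

lemma coeff_linPow (c : Fin n → ℝ) (N : ℕ) (d : Fin n →₀ ℕ) :
    coeff d (linPow c N) =
      if d.degree = N then Nat.multinomial univ d * ∏ i, c i ^ d i else 0 := by
  have h : linPow c N = (∑ i, c i • X i) ^ N := by simp [linPow, C_mul']
  rw [h, coeff_linearCombination_X_pow_of_fintype,
    Finsupp.multinomial_eq_of_support_subset (subset_univ _), Finsupp.prod_fintype _ _ (by simp),
    Finsupp.sum_fintype _ _ (by simp), ← Finsupp.degree_eq_sum]

lemma bombieriPair_expand_self {q : ℕ} (hq : q ≠ 0) (φ : MvPolynomial (Fin n) ℝ) :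
    bombieriPair (expand q φ) (expand q φ)
      = ∑ d ∈ φ.support, factorialProd (q • d) * coeff d φ ^ 2 := by
  rw [bombieriPair, support_expand φ hq,
    sum_image fun _ _ _ _ h => smul_right_injective _ hq h]
  simp [coeff_expand_smul q hq, sq, mul_assoc]

lemma bombieriPair_linPow_self_le (c : Fin n → ℝ) (N : ℕ) :
    bombieriPair (linPow c N) (linPow c N) ≤ N.factorial * (∑ i, c i ^ 2) ^ N := by
  rw [← expand_one_apply (linPow c N), bombieriPair_expand_self one_ne_zero]
  have hdeg {d} (hd : d ∈ (linPow c N).support) : d.degree = N :=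
    (isHomogeneous_linPow c N).degree_of_mem_support hd
  calc ∑ d ∈ (linPow c N).support, factorialProd (1 • d) * coeff d (linPow c N) ^ 2
      = N.factorial * ∑ d ∈ (linPow c N).support,
          (Nat.multinomial univ d : ℝ) * ∏ i, (c i ^ 2) ^ d i := by
        rw [mul_sum]
        refine sum_congr rfl fun d hd => ?_
        rw [one_smul, coeff_linPow, if_pos (hdeg hd), mul_pow, sq_prod_pow, ← hdeg hd,
          ← factorialProd_mul_multinomial]
        ring
    _ ≤ N.factorial * (∑ i, c i ^ 2) ^ N :=
        mul_le_mul_of_nonneg_left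
          (sum_multinomial_mul_prod_pow_le (fun _ => hdeg) fun i => sq_nonneg (c i))
          (Nat.cast_nonneg _)

lemma bombieriPair_expand_linPow_self_le {q : ℕ} (hq : 2 ≤ q) {c : Fin n → ℝ} {M : ℝ}
    (hM : ∀ i, |c i| ≤ M) (N : ℕ) :
    bombieriPair (expand q (linPow c N)) (expand q (linPow c N))
      ≤ (q * N).factorial * (N + 1) ^ n * M ^ (2 * N) := by
  rw [bombieriPair_expand_self (by omega)]
  have hterm : ∀ d ∈ (linPow c N).support,
      factorialProd (q • d) * coeff d (linPow c N) ^ 2 ≤ (q * N).factorial * M ^ (2 * N) := by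
    intro d hd
    have hdeg : d.degree = N := (isHomogeneous_linPow c N).degree_of_mem_support hd
    rw [coeff_linPow, if_pos hdeg, mul_pow, sq_prod_pow, ← mul_assoc]
    refine mul_le_mul ?_ ?_ (prod_nonneg fun i _ => by positivity) (Nat.cast_nonneg _)
    · calc factorialProd (q • d) * (Nat.multinomial univ d : ℝ) ^ 2
          ≤ factorialProd (q • d) * Nat.multinomial univ ⇑(q • d) :=
            mul_le_mul_of_nonneg_left
              (mod_cast Nat.multinomial_sq_le_multinomial_smul univ d hq) (factorialProd_pos _).le
        _ = (q * N).factorial := by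
            rw [factorialProd_mul_multinomial, map_nsmul, hdeg, smul_eq_mul]
    · calc ∏ i, (c i ^ 2) ^ d i ≤ ∏ i, (M ^ 2) ^ d i :=
            prod_le_prod (fun i _ => by positivity) fun i _ =>
              pow_le_pow_left₀ (sq_nonneg _) (sq_le_sq.mpr ((hM i).trans (le_abs_self M))) _
        _ = M ^ (2 * N) := by rw [prod_pow_eq_pow_sum, ← Finsupp.degree_eq_sum, hdeg, pow_mul]
  calc ∑ d ∈ (linPow c N).support, factorialProd (q • d) * coeff d (linPow c N) ^ 2
      ≤ #(linPow c N).support • ((q * N).factorial * M ^ (2 * N)) :=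
        sum_le_card_nsmul _ _ _ hterm
    _ ≤ (N + 1) ^ n * ((q * N).factorial * M ^ (2 * N)) := by
        rw [nsmul_eq_mul]
        gcongr
        · rw [pow_mul]; positivity
        · exact_mod_cast (Fintype.card_fin n ▸ (isHomogeneous_linPow c N).card_support_le)
    _ = _ := by ring

noncomputable def diagForm (lam : Fin n → ℝ) (q : ℕ) : MvPolynomial (Fin n) ℝ :=
  ∑ i, C (lam i) * X i ^ q

lemma eval_diagForm (lam : Fin n → ℝ) (q : ℕ) (x : Fin n → ℝ) :
    eval x (diagForm lam q) = ∑ i, lam i * x i ^ q := by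
  simp [diagForm]

lemma diagForm_pow (lam : Fin n → ℝ) (q N : ℕ) :
    diagForm lam q ^ N = expand q (linPow lam N) := by
  simp [diagForm, linPow, map_sum]

lemma sum_pi_single_sq (j : Fin n) : ∑ i, (Pi.single j (1 : ℝ) : Fin n → ℝ) i ^ 2 = 1 := by
  simp [Pi.single_apply]

lemma exists_sum_sq_eq_one_sq_sum_mul_eq (hn : 0 < n) (c : Fin n → ℝ) :
    ∃ y : Fin n → ℝ, ∑ i, y i ^ 2 = 1 ∧ (∑ i, c i * y i) ^ 2 = ∑ i, c i ^ 2 := by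
  by_cases hc : ∑ i, c i ^ 2 = 0
  · have hc0 : c = 0 := funext fun i => pow_eq_zero_iff two_ne_zero |>.mp <|
      (sum_eq_zero_iff_of_nonneg fun i _ => sq_nonneg (c i)).mp hc i (mem_univ i)
    exact ⟨Pi.single ⟨0, hn⟩ 1, sum_pi_single_sq _, by simp [hc0]⟩
  · have hs : (0 : ℝ) ≤ ∑ i, c i ^ 2 := by positivity
    refine ⟨fun i => c i / √(∑ i, c i ^ 2), ?_, ?_⟩
    · simp_rw [div_pow, ← sum_div, Real.sq_sqrt hs, div_self hc]
    · simp_rw [mul_div, ← sq, ← sum_div, div_pow, Real.sq_sqrt hs]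
      field_simp

theorem exists_bombieriPair_diagForm_pow_le (hn : 0 < n) (lam : Fin n → ℝ) (q : ℕ) :
    ∃ y : Fin n → ℝ, ∑ i, y i ^ 2 = 1 ∧ ∀ N,
      bombieriPair (diagForm lam q ^ N) (diagForm lam q ^ N)
        ≤ (q * N).factorial * (N + 1) ^ n * eval y (diagForm lam q) ^ (2 * N) := by
  have hpoly (N : ℕ) : (1 : ℝ) ≤ (N + 1) ^ n :=
    one_le_pow₀ (by linarith [N.cast_nonneg (α := ℝ)])
  rcases q with _ | _ | q
  · refine ⟨Pi.single ⟨0, hn⟩ 1, sum_pi_single_sq _, fun N => ?_⟩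
    have hC : diagForm lam 0 = C (∑ i, lam i) := by simp [diagForm]
    rw [hC, ← map_pow, bombieriPair_C_left, constantCoeff_C, eval_C, ← sq, ← pow_mul, mul_comm N 2]
    simpa using mul_le_mul_of_nonneg_right (hpoly N)
      (by rw [pow_mul]; positivity : 0 ≤ (∑ i, lam i) ^ (2 * N))
  · obtain ⟨y, hy, hyc⟩ := exists_sum_sq_eq_one_sq_sum_mul_eq hn lam
    refine ⟨y, hy, fun N => ?_⟩
    rw [diagForm_pow, expand_one_apply, eval_diagForm, pow_mul]
    simp only [pow_one, hyc, zero_add, one_mul]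
    calc bombieriPair (linPow lam N) (linPow lam N) ≤ N.factorial * (∑ i, lam i ^ 2) ^ N :=
          bombieriPair_linPow_self_le lam N
      _ ≤ _ := by gcongr; exact le_mul_of_one_le_right (Nat.cast_nonneg _) (hpoly N)
  · obtain ⟨j, -, hj⟩ := exists_max_image univ (fun i => |lam i|) ⟨⟨0, hn⟩, mem_univ _⟩
    refine ⟨Pi.single j 1, sum_pi_single_sq j, fun N => ?_⟩
    have hy : eval (Pi.single j 1) (diagForm lam (q + 2)) = lam j := by
      simp [eval_diagForm, Pi.single_apply]
    rw [diagForm_pow, hy, pow_mul, ← sq_abs, ← pow_mul]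
    exact bombieriPair_expand_linPow_self_le (by omega) (fun i => hj i (mem_univ i)) N

end DiagonalForm

section Limit

open Filter Topology

variable {n : ℕ}

theorem exists_le_sigmaNorm_bombieriNorm_pow_le {p q m : ℕ} {a : ℝ}
    {g : MvPolynomial (Fin n) ℝ} {Q : Matrix (Fin n) (Fin n) ℝ} {lam : Fin n → ℝ} (hm : 0 < m)
    (hf : (C a * g ^ m).IsHomogeneous p) (hf0 : C a * g ^ m ≠ 0) (hg : g.IsHomogeneous q)
    (hQ : Qᵀ * Q = 1) (heval : ∀ x : Fin n → ℝ, eval (Q *ᵥ x) g = ∑ i, lam i * x i ^ q) :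
    ∃ L, 0 ≤ L ∧ L ≤ sigmaNorm (C a * g ^ m) ∧ ∀ k : ℕ,
      bombieriNorm (k * p) ((C a * g ^ m) ^ k) ≤ L ^ k * √((((m * k : ℕ) : ℝ) + 1) ^ n) := by
  have hn : 0 < n := by
    refine Nat.pos_of_ne_zero fun hn => hf0 ?_
    subst hn
    have hg0 : g = 0 := MvPolynomial.funext fun x => by
      simpa [Subsingleton.elim (Q *ᵥ x) x] using heval x
    simp [hg0, hm.ne']
  have hp : p = q * m := hf.inj_right ((hg.pow m).C_mul a) hf0
  have hgD : linearSubst Q g = diagForm lam q :=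
    MvPolynomial.funext fun x => by rw [eval_linearSubst, heval, eval_diagForm]
  obtain ⟨y, hy, hD⟩ := exists_bombieriPair_diagForm_pow_le hn lam q
  refine ⟨|a| * |eval y (diagForm lam q)| ^ m, by positivity, ?_, fun k => ?_⟩
  · calc |a| * |eval y (diagForm lam q)| ^ m = |eval (Q *ᵥ y) (C a * g ^ m)| := by
          simp [heval, eval_diagForm, abs_mul, abs_pow]
      _ ≤ _ := abs_eval_le_sigmaNorm hf (by rwa [sum_sq_mulVec hQ])
  · calc bombieriNorm (k * p) ((C a * g ^ m) ^ k)
        = |a| ^ k * bombieriNorm (q * (m * k)) (diagForm lam q ^ (m * k)) := by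
          rw [mul_pow, ← map_pow, ← pow_mul, bombieriNorm_C_mul, abs_pow,
            ← bombieriNorm_linearSubst hQ, map_pow, hgD, hp, mul_comm k, mul_assoc]
      _ ≤ |a| ^ k * (|eval y (diagForm lam q) ^ (m * k)| * √((((m * k : ℕ) : ℝ) + 1) ^ n)) := by
          gcongr
          exact bombieriNorm_le_of_bombieriPair_le
            (by simpa [← pow_mul, mul_comm] using hD (m * k))
      _ = _ := by rw [abs_pow, mul_pow, pow_mul]; ring

lemma tendsto_sqrt_pow_rpow_one_div {m : ℕ} (hm : 0 < m) (n : ℕ) :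
    Tendsto (fun k : ℕ => √((((m * k : ℕ) : ℝ) + 1) ^ n) ^ ((1 : ℝ) / k)) atTop (𝓝 1) := by
  have hlin : Tendsto (fun k : ℕ => (m : ℝ) * k + 1) atTop atTop :=
    tendsto_atTop_add_const_right _ 1
      (tendsto_natCast_atTop_atTop.const_mul_atTop (by exact_mod_cast hm))
  refine ((tendsto_rpow_div_mul_add (n * m / 2) 1 (-1) (by norm_num)).comp hlin).congr' ?_
  filter_upwards [eventually_ne_atTop 0] with k hk
  have hx : (0 : ℝ) ≤ m * k + 1 := by positivity
  simp only [Function.comp_apply, Nat.cast_mul]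
  rw [Real.sqrt_eq_rpow, ← Real.rpow_natCast, ← Real.rpow_mul hx, ← Real.rpow_mul hx]
  congr 1
  field_simp
  ring

lemma tendsto_rpow_one_div_of_le_of_le {u c : ℕ → ℝ} {L s : ℝ}
    (hc : Tendsto (fun k : ℕ => c k ^ ((1 : ℝ) / k)) atTop (𝓝 1))
    (hlow : ∀ k ≠ 0, s ≤ u k ^ ((1 : ℝ) / k)) (hup : ∀ k ≠ 0, u k ≤ L ^ k * c k)
    (hL : 0 ≤ L) (hLs : L ≤ s) (hu : ∀ k, 0 ≤ u k) (hc0 : ∀ k, 0 ≤ c k) :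
    Tendsto (fun k : ℕ => u k ^ ((1 : ℝ) / k)) atTop (𝓝 s) := by
  refine tendsto_of_tendsto_of_tendsto_of_le_of_le' tendsto_const_nhds
    (by simpa only [mul_one] using hc.const_mul s)
    (eventually_atTop.mpr ⟨1, fun k hk => hlow k (by omega)⟩) ?_
  filter_upwards [eventually_ne_atTop 0] with k hk
  calc u k ^ ((1 : ℝ) / k) ≤ (L ^ k * c k) ^ ((1 : ℝ) / k) :=
        Real.rpow_le_rpow (hu k) (hup k hk) (by positivity)
    _ = L * c k ^ ((1 : ℝ) / k) := by
        rw [Real.mul_rpow (pow_nonneg hL k) (hc0 k), one_div, Real.pow_rpow_inv_natCast hL hk]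
    _ ≤ s * c k ^ ((1 : ℝ) / k) :=
        mul_le_mul_of_nonneg_right hLs (Real.rpow_nonneg (hc0 k) _)

end Limit

/-- If `f` is proportional to a power of an orthogonally
diagonalizable homogeneous polynomial `g` (i.e. `f = a g^m` with
`g(Qx) = ∑ λᵢ xᵢ^q` for some orthogonal `Q`), then
`ρ₁(f) = lim_k ‖f^k‖_HS^{1/k} = ‖f‖_σ`. -/
theorem rho_one_eq_sigmaNorm_of_diagonalizable {n p : ℕ}
    (f : MvPolynomial (Fin n) ℝ) (hf : f.IsHomogeneous p)
    (hdiag : ∃ (q m : ℕ) (a : ℝ) (g : MvPolynomial (Fin n) ℝ)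
      (Q : Matrix (Fin n) (Fin n) ℝ) (lam : Fin n → ℝ),
      0 < m ∧ g.IsHomogeneous q ∧ Q.transpose * Q = 1 ∧
      f = MvPolynomial.C a * g ^ m ∧
      ∀ x : Fin n → ℝ,
        MvPolynomial.eval (Q.mulVec x) g = ∑ i, lam i * x i ^ q) :
    Filter.Tendsto (fun k : ℕ => bombieriNorm (k * p) (f ^ k) ^ ((1 : ℝ) / k))
      Filter.atTop (nhds (sigmaNorm f)) := by
  obtain ⟨q, m, a, g, Q, lam, hm, hg, hQ, rfl, heval⟩ := hdiag
  obtain ⟨L, hL, hLσ, hup⟩ : ∃ L, 0 ≤ L ∧ L ≤ sigmaNorm (C a * g ^ m) ∧ ∀ k ≠ 0,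
      bombieriNorm (k * p) ((C a * g ^ m) ^ k) ≤ L ^ k * √((((m * k : ℕ) : ℝ) + 1) ^ n) := by
    rcases eq_or_ne (C a * g ^ m) 0 with h0 | hf0
    · exact ⟨0, le_rfl, sigmaNorm_nonneg _, fun k hk => by simp [h0, zero_pow hk, bombieriNorm]⟩
    · obtain ⟨L, hL, hLσ, hup⟩ := exists_le_sigmaNorm_bombieriNorm_pow_le hm hf hf0 hg hQ heval
      exact ⟨L, hL, hLσ, fun k _ => hup k⟩
  exact tendsto_rpow_one_div_of_le_of_le (tendsto_sqrt_pow_rpow_one_div hm n)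
    (fun k hk => sigmaNorm_le_bombieriNorm_pow_rpow hf hk) hup hL hLσ
    (fun _ => bombieriNorm_nonneg _ _) (fun _ => Real.sqrt_nonneg _)
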